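/- Let X_1, …, X_s be independent and identically distributed random variables on a probability space (Ω, F, P), each taking values in {1,…,n}, let c ∈ {1,…,n}, set p = P(X_1 = c), and let f be a natural number. Define W_j = 1 if #{i ≠ j : X_i = X_j} ≥ f and W_j = 0 otherwise, and let B(p) = ∑_{m=f}^{s-1} C(s−1, m) p^m (1 − p)^{s−1−m} denote the Binomial(s−1, p) upper-tail probability at f. Then for every j, p · B(p) ≤ P(W_j = 1) ≤ p · B(p) + (1 − p). -/

import Mathlib

open MeasureTheory ProbabilityTheory Finset
open scoped ENNReal

/-!
On the event `X j = c`, the specialists agreeing with `j` are exactly the other indices `i` with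
`X i = c`, and their number is `Binomial (s - 1, p)`. Since it depends only on the `X i` with
`i ≠ j`, it is independent of `X j`, so `P(W j = 1, X j = c) = p · B(p)`. The lower bound drops
the event `X j ≠ c`, and the upper bound estimates its probability by `1 - p`.
-/

section Hits

variable {Ω ι β : Type*}

open Classical in
noncomputable def hits (X : ι → Ω → β) (t : Set β) (U : Finset ι) (ω : Ω) : Finset ι :=
  {i ∈ U | X i ω ∈ t}

variable {X : ι → Ω → β} {t : Set β} {U : Finset ι}

lemma mem_hits {ω : Ω} {i : ι} : i ∈ hits X t U ω ↔ i ∈ U ∧ X i ω ∈ t := by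
  classical
  simp [hits]

lemma setOf_hits_eq [DecidableEq ι] {T : Finset ι} (hTU : T ⊆ U) :
    {ω | hits X t U ω = T} = ⋂ i ∈ U, X i ⁻¹' (if i ∈ T then t else tᶜ) := by
  ext ω
  simp only [Set.mem_ofPred_eq, Set.mem_iInter, Set.mem_preimage, Finset.ext_iff, mem_hits]
  refine ⟨fun h i hi => ?_, fun h i => ?_⟩
  · by_cases hiT : i ∈ T
    · simpa only [if_pos hiT] using ((h i).2 hiT).2
    · simp only [if_neg hiT, Set.mem_compl_iff]
      exact fun hit => hiT ((h i).1 ⟨hi, hit⟩)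
  · by_cases hi : i ∈ U
    · by_cases hiT : i ∈ T <;> simpa [hi, hiT] using h i hi
    · exact iff_of_false (fun h' => hi h'.1) fun hiT => hi (hTU hiT)

lemma card_hits_eq_sum_indicator (ω : Ω) :
    #(hits X t U ω) = ∑ i ∈ U, t.indicator (1 : β → ℕ) (X i ω) := by
  classical
  rw [hits, card_filter]
  simp only [Set.indicator_apply, Pi.one_apply]

variable [MeasurableSpace Ω] [MeasurableSpace β]

lemma measurableSet_setOf_hits_eq (hXm : ∀ i, Measurable (X i)) (ht : MeasurableSet t)
    {T : Finset ι} (hTU : T ⊆ U) : MeasurableSet {ω | hits X t U ω = T} := by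
  classical
  rw [setOf_hits_eq hTU]
  refine Finset.measurableSet_biInter _ fun i _ => hXm i ?_
  split_ifs
  exacts [ht, ht.compl]

lemma measurable_card_hits (hXm : ∀ i, Measurable (X i)) (ht : MeasurableSet t) :
    Measurable fun ω => #(hits X t U ω) := by
  simp only [card_hits_eq_sum_indicator]
  exact Finset.measurable_sum _ fun i _ => (measurable_one.indicator ht).comp (hXm i)

variable {μ : Measure Ω} {q : ℝ≥0∞}

lemma ProbabilityTheory.iIndepFun.indepFun_card_hits (hX : iIndepFun X μ)
    (hXm : ∀ i, Measurable (X i)) (ht : MeasurableSet t) {j : ι} (hj : j ∉ U) :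
    IndepFun (fun ω => #(hits X t U ω)) (X j) μ := by
  have hg : Measurable fun v : U → β => ∑ i, t.indicator (1 : β → ℕ) (v i) :=
    Finset.measurable_sum _ fun i _ => (measurable_one.indicator ht).comp (measurable_pi_apply i)
  have hUj := (hX.indepFun_finset U {j} (disjoint_singleton_right.2 hj) hXm).comp hg
    (measurable_pi_apply ⟨j, mem_singleton_self j⟩)
  convert hUj using 1
  · ext ω
    simp only [card_hits_eq_sum_indicator, Function.comp_apply]
    exact (sum_coe_sort U fun i => t.indicator 1 (X i ω)).symm
  · rfl

variable [IsProbabilityMeasure μ] (hX : iIndepFun X μ) (hXm : ∀ i, Measurable (X i))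
  (ht : MeasurableSet t) (hq : ∀ i ∈ U, μ (X i ⁻¹' t) = q)
include hX hXm ht hq

lemma measure_setOf_hits_eq {T : Finset ι} (hTU : T ⊆ U) :
    μ {ω | hits X t U ω = T} = q ^ #T * (1 - q) ^ (#U - #T) := by
  classical
  have hsets : ∀ i ∈ U, MeasurableSet (if i ∈ T then t else tᶜ) := fun i _ => by
    split_ifs
    exacts [ht, ht.compl]
  have hfactor : ∀ i ∈ U, μ (X i ⁻¹' (if i ∈ T then t else tᶜ)) = if i ∈ T then q else 1 - q :=
    fun i hi => by
      split_ifs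
      · exact hq i hi
      · rw [Set.preimage_compl, prob_compl_eq_one_sub (hXm i ht), hq i hi]
  rw [setOf_hits_eq hTU, hX.measure_inter_preimage_eq_mul U hsets, prod_congr rfl hfactor,
    ← prod_sdiff hTU, prod_congr rfl fun i hi => if_neg (mem_sdiff.1 hi).2,
    prod_congr rfl fun i (hi : i ∈ T) => if_pos hi, prod_const, prod_const,
    card_sdiff_of_subset hTU, mul_comm]

lemma measure_setOf_card_hits_eq (m : ℕ) :
    μ {ω | #(hits X t U ω) = m} = (#U).choose m * q ^ m * (1 - q) ^ (#U - m) := by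
  have hunion : {ω | #(hits X t U ω) = m} = ⋃ T ∈ U.powersetCard m, {ω | hits X t U ω = T} := by
    ext ω
    simp only [Set.mem_ofPred_eq, Set.mem_iUnion, mem_powersetCard, exists_prop]
    exact ⟨fun h => ⟨_, ⟨fun i hi => (mem_hits.1 hi).1, h⟩, rfl⟩, fun ⟨T, ⟨_, hT⟩, h⟩ => h ▸ hT⟩
  have hdisj : (U.powersetCard m : Set (Finset ι)).PairwiseDisjoint
      fun T => {ω | hits X t U ω = T} :=
    fun T _ T' _ hne => Set.disjoint_left.2 fun ω h h' => hne (h.symm.trans h')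
  rw [hunion, measure_biUnion_finset hdisj fun T hT =>
      measurableSet_setOf_hits_eq hXm ht (mem_powersetCard.1 hT).1,
    sum_congr rfl fun T hT => by
      rw [measure_setOf_hits_eq hX hXm ht hq (mem_powersetCard.1 hT).1, (mem_powersetCard.1 hT).2],
    sum_const, card_powersetCard, nsmul_eq_mul, mul_assoc]

lemma measure_setOf_le_card_hits (f : ℕ) :
    μ {ω | f ≤ #(hits X t U ω)} =
      ∑ m ∈ Icc f #U, ((#U).choose m : ℝ≥0∞) * q ^ m * (1 - q) ^ (#U - m) := by
  have hunion : {ω | f ≤ #(hits X t U ω)} = ⋃ m ∈ Icc f #U, {ω | #(hits X t U ω) = m} := by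
    ext ω
    simp only [Set.mem_ofPred_eq, Set.mem_iUnion, mem_Icc, exists_prop]
    exact ⟨fun h => ⟨_, ⟨h, card_le_card fun i hi => (mem_hits.1 hi).1⟩, rfl⟩,
      fun ⟨m, ⟨hm, _⟩, h⟩ => h ▸ hm⟩
  have hdisj : (Icc f #U : Set ℕ).PairwiseDisjoint fun m => {ω | #(hits X t U ω) = m} :=
    fun m _ m' _ hne => Set.disjoint_left.2 fun ω h h' => hne (h.symm.trans h')
  rw [hunion, measure_biUnion_finset hdisj fun m _ =>
      measurable_card_hits hXm ht (measurableSet_singleton m)]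
  exact sum_congr rfl fun m _ => measure_setOf_card_hits_eq hX hXm ht hq m

end Hits

theorem prob_indicator_agree_bounds_general
    {Ω : Type*} [MeasurableSpace Ω] (μ : Measure Ω) [IsProbabilityMeasure μ]
    (s n : ℕ) (X : Fin s → Ω → Fin n)
    (hmeas : ∀ j, Measurable (X j))
    (hindep : iIndepFun X μ)
    (c : Fin n) (p : ℝ≥0∞) (hp : ∀ j, μ {ω | X j ω = c} = p)
    (f : ℕ) (W : Fin s → Ω → ℕ)
    (hW : ∀ j ω, W j ω =
      if f ≤ (Finset.univ.filter fun i => i ≠ j ∧ X i ω = X j ω).card then 1 else 0) :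
    ∀ j : Fin s,
      p * (∑ m ∈ Finset.Icc f (s - 1),
          ((s - 1).choose m : ℝ≥0∞) * p ^ m * (1 - p) ^ (s - 1 - m)) ≤
        μ {ω | W j ω = 1} ∧
      μ {ω | W j ω = 1} ≤
        p * (∑ m ∈ Finset.Icc f (s - 1),
          ((s - 1).choose m : ℝ≥0∞) * p ^ m * (1 - p) ^ (s - 1 - m)) + (1 - p) := by
  intro j
  set A := X j ⁻¹' {c}
  set N := fun ω => #(hits X {c} (univ.erase j) ω)
  have hA : MeasurableSet A := hmeas j (measurableSet_singleton c)
  have hagree : ∀ ω, X j ω = c →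
      (univ.filter fun i => i ≠ j ∧ X i ω = X j ω) = hits X {c} (univ.erase j) ω :=
    fun ω hc => by ext i; simp [mem_hits, hc, and_comm]
  have hWA : {ω | W j ω = 1} ∩ A = A ∩ N ⁻¹' Set.Ici f := by
    ext ω
    by_cases hc : X j ω = c
    · simp only [Set.mem_inter_iff, Set.mem_ofPred_eq, hW j ω, hagree ω hc]
      simp [A, N, hc]
    · simp [A, hc]
  have hjoint : μ (A ∩ N ⁻¹' Set.Ici f) = p * ∑ m ∈ Icc f (s - 1),
      ((s - 1).choose m : ℝ≥0∞) * p ^ m * (1 - p) ^ (s - 1 - m) := by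
    have htail := measure_setOf_le_card_hits (U := univ.erase j) hindep hmeas
      (measurableSet_singleton c) (fun i _ => hp i) f
    rw [card_erase_of_mem (mem_univ j), card_univ, Fintype.card_fin] at htail
    rw [Set.inter_comm, (hindep.indepFun_card_hits hmeas (measurableSet_singleton c)
      (notMem_erase j univ)).measure_inter_preimage_eq_mul _ _ measurableSet_Ici
      (measurableSet_singleton c), mul_comm]
    exact congrArg₂ (· * ·) (hp j) htail
  constructor
  · calc _ = μ ({ω | W j ω = 1} ∩ A) := by rw [hWA, hjoint]
      _ ≤ μ {ω | W j ω = 1} := measure_mono Set.inter_subset_left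
  · calc μ {ω | W j ω = 1} ≤ μ ({ω | W j ω = 1} ∩ A) + μ ({ω | W j ω = 1} \ A) :=
          measure_le_inter_add_sdiff _ _ _
      _ ≤ μ ({ω | W j ω = 1} ∩ A) + μ Aᶜ := by gcongr; exact Set.sdiff_subset_compl _ _
      _ = _ := by rw [hWA, hjoint, prob_compl_eq_one_sub hA]; congr 2; exact hp j

/-- If `X 1, …, X s` are i.i.d. with values in `Fin n`, `p = P(X = c)` for a fixed
dimension `c`, `W j` is the indicator that `#{i ≠ j : X i = X j} ≥ f`, and
`B(p) = ∑_{m=f}^{s-1} C(s-1, m) p^m (1-p)^(s-1-m)` is the `Binomial (s-1, p)` upper-tail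
probability at `f`, then `p · B(p) ≤ P(W j = 1) ≤ p · B(p) + (1 - p)` for every `j`. -/
theorem prob_indicator_agree_bounds
    {Ω : Type*} [MeasurableSpace Ω] (μ : Measure Ω) [IsProbabilityMeasure μ]
    (s n : ℕ) (X : Fin s → Ω → Fin n)
    (hmeas : ∀ j, Measurable (X j))
    (hindep : iIndepFun X μ)
    (hid : ∀ i j, IdentDistrib (X i) (X j) μ μ)
    (c : Fin n) (p : ℝ≥0∞) (hp : ∀ j, μ {ω | X j ω = c} = p)
    (f : ℕ) (W : Fin s → Ω → ℕ)
    (hW : ∀ j ω, W j ω =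
      if f ≤ (Finset.univ.filter fun i => i ≠ j ∧ X i ω = X j ω).card then 1 else 0) :
    ∀ j : Fin s,
      p * (∑ m ∈ Finset.Icc f (s - 1),
          ((s - 1).choose m : ℝ≥0∞) * p ^ m * (1 - p) ^ (s - 1 - m)) ≤
        μ {ω | W j ω = 1} ∧
      μ {ω | W j ω = 1} ≤
        p * (∑ m ∈ Finset.Icc f (s - 1),
          ((s - 1).choose m : ℝ≥0∞) * p ^ m * (1 - p) ^ (s - 1 - m)) + (1 - p) :=
  prob_indicator_agree_bounds_general μ s n X hmeas hindep c p hp f W hW
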